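/- With the construction below: if there exists an index j ∈ {1,…,n} with α_j = β_j = 1, then ED(x1 ∘ x2, y) ≤ 7n − 3. -/

import Mathlib

/-!
Cut `x1`, `x2` and `y` into `n` blocks of 4, 4 and 6 symbols, block `i` living on the values
`6i+1, …, 6i+6`; every block of `x1` or `x2` is three edits away from the block of `y`.
If `α_j = β_j = 1`, align the blocks of `x1` before `j` with those of `y` (cost `3j`), block `j`
of `x1` with `6j+1, 6j+2` (cost 2), delete the last `4(n-1-j)` symbols of `x1` and the first
`4j` of `x2`, align block `j` of `x2` with `6j+3, …, 6j+6` (cost 2) and the remaining blocks of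
`x2` with those of `y` (cost `3(n-1-j)`): `7n - 3` edits in total.
-/

open List

/-- Costs for the edit operations (as in the former `Mathlib.Data.List.EditDistance.Defs`). -/
structure Levenshtein.Cost (α β δ : Type*) where
  delete : α → δ
  insert : β → δ
  substitute : α → β → δ

/-- The default cost structure: every operation costs 1, substituting equal symbols costs 0. -/
def Levenshtein.defaultCost {α : Type*} [DecidableEq α] : Levenshtein.Cost α α ℕ where
  delete _ := 1
  insert _ := 1
  substitute a b := if a = b then 0 else 1

/-- Levenshtein distance with cost structure `C` (former Mathlib definition, by its
characterizing equations). -/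
def levenshtein {α β δ : Type*} [AddZeroClass δ] [Min δ] (C : Levenshtein.Cost α β δ) :
    List α → List β → δ
  | [], [] => 0
  | [], y :: ys => C.insert y + levenshtein C [] ys
  | x :: xs, [] => C.delete x + levenshtein C xs []
  | x :: xs, y :: ys =>
    min (C.delete x + levenshtein C xs (y :: ys))
      (min (C.insert y + levenshtein C (x :: xs) ys)
        (C.substitute x y + levenshtein C xs ys))

/-- Edit distance: minimum number of single-symbol insertions, deletions and
substitutions needed to transform `u` into `v` (Levenshtein distance with unit costs). -/
def ED {α : Type*} [DecidableEq α] (u v : List α) : ℕ :=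
  levenshtein Levenshtein.defaultCost u v

/- The alphabet `{1,…,6n} ∪ {a}` is modelled inside `ℕ`, with the special symbol `a := 0`
(distinct from all the integer symbols `1,…,6n`).  Indices of `α, β ∈ {0,1}^n` are
`0`-based: `α_j` (`1 ≤ j ≤ n`) is `a (j-1)`. -/

/-- `α' ∈ {0,1}^{2n}` (0-based): `α'_{2j−1} = α_j`, `α'_{2j} = 1 − α_j`. -/
def alphaP (a : ℕ → Bool) (j : ℕ) : Bool :=
  if j % 2 = 0 then a (j / 2) else !a (j / 2)

/-- `β' ∈ {0,1}^{2n}` (0-based): `β'_{2j−1} = 1 − β_j`, `β'_{2j} = β_j`. -/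
def betaP (b : ℕ → Bool) (j : ℕ) : Bool :=
  if j % 2 = 0 then !b (j / 2) else b (j / 2)

/-- `x1 ∈ Σ^{4n}` : for `j ∈ {1,…,2n}`, the `(2j−1)`-th symbol is `3j−2` and the `(2j)`-th
symbol is `3j−1` if `α'_j = 1`, and `a` (here `0`) otherwise. -/
def x1 (n : ℕ) (a : ℕ → Bool) : List ℕ :=
  ((List.range (2 * n)).map fun j =>
    [3 * (j + 1) - 2, if alphaP a j then 3 * (j + 1) - 1 else 0]).flatten

/-- `x2 ∈ Σ^{4n}` : for `j ∈ {1,…,2n}`, the `(2j−1)`-th symbol is `3j−1` if `β'_j = 1`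
(and `a`, here `0`, otherwise), and the `(2j)`-th symbol is `3j`. -/
def x2 (n : ℕ) (b : ℕ → Bool) : List ℕ :=
  ((List.range (2 * n)).map fun j =>
    [if betaP b j then 3 * (j + 1) - 1 else 0, 3 * (j + 1)]).flatten

/-- `y = (1, 2, …, 6n)`. -/
def ystr (n : ℕ) : List ℕ := List.range' 1 (6 * n)

section EditDistance

variable {α : Type*} [DecidableEq α]

theorem ED_nil_left (v : List α) : ED [] v = v.length := by
  induction v with
  | nil => simp [ED, levenshtein]
  | cons y v ih => simp_all [ED, levenshtein, Levenshtein.defaultCost, Nat.add_comm]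

theorem ED_nil_right (u : List α) : ED u [] = u.length := by
  induction u with
  | nil => simp [ED, levenshtein]
  | cons x u ih => simp_all [ED, levenshtein, Levenshtein.defaultCost, Nat.add_comm]

theorem ED_cons_cons (x y : α) (u v : List α) :
    ED (x :: u) (y :: v) =
      min (ED u (y :: v) + 1) (min (ED (x :: u) v + 1) (ED u v + if x = y then 0 else 1)) := by
  simp only [ED, levenshtein, Levenshtein.defaultCost, Nat.add_comm]

theorem ED_cons_left_le (x : α) (u v : List α) : ED (x :: u) v ≤ ED u v + 1 := by
  cases v with
  | nil => simp [ED_nil_right]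
  | cons y v => rw [ED_cons_cons]; exact min_le_left _ _

theorem ED_cons_right_le (y : α) (u v : List α) : ED u (y :: v) ≤ ED u v + 1 := by
  cases u with
  | nil => simp [ED_nil_left]
  | cons x u => rw [ED_cons_cons]; exact (min_le_right _ _).trans (min_le_left _ _)

theorem ED_cons_cons_le (x y : α) (u v : List α) :
    ED (x :: u) (y :: v) ≤ ED u v + if x = y then 0 else 1 := by
  rw [ED_cons_cons]; exact (min_le_right _ _).trans (min_le_right _ _)

theorem ED_append_le (u₁ u₂ v₁ v₂ : List α) :
    ED (u₁ ++ u₂) (v₁ ++ v₂) ≤ ED u₁ v₁ + ED u₂ v₂ := by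
  induction u₁ generalizing v₁ with
  | nil =>
    induction v₁ with
    | nil => simp [ED_nil_left]
    | cons y v ih =>
      have := ED_cons_right_le y ([] ++ u₂) (v ++ v₂)
      simp only [ED_nil_left, List.length_cons, List.cons_append] at ih this ⊢
      omega
  | cons x u ihu =>
    induction v₁ with
    | nil =>
      have := ED_cons_left_le x (u ++ u₂) ([] ++ v₂)
      have := ihu []
      simp only [ED_nil_right, List.length_cons, List.cons_append] at this ⊢
      omega
    | cons y v ihv =>
      simp only [List.cons_append] at ihv ⊢
      rw [ED_cons_cons x y u v, ← min_add_add_right, ← min_add_add_right]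
      refine le_min ?_ (le_min ?_ ?_)
      · have := ihu (y :: v)
        have := ED_cons_left_le x (u ++ u₂) (y :: (v ++ v₂))
        simp only [List.cons_append] at *
        omega
      · have := ED_cons_right_le y (x :: (u ++ u₂)) (v ++ v₂)
        omega
      · have := ihu v
        have := ED_cons_cons_le x y (u ++ u₂) (v ++ v₂)
        omega

theorem ED_cons_self_le_of_le {x : α} {u v : List α} {k : ℕ} (h : ED u v ≤ k) :
    ED (x :: u) (x :: v) ≤ k :=
  (ED_cons_cons_le x x u v).trans (by simpa using h)

theorem ED_cons_left_le_of_le {x : α} {u v : List α} {k : ℕ} (h : ED u v ≤ k) :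
    ED (x :: u) v ≤ k + 1 :=
  (ED_cons_left_le x u v).trans (by omega)

theorem ED_cons_right_le_of_le {y : α} {u v : List α} {k : ℕ} (h : ED u v ≤ k) :
    ED u (y :: v) ≤ k + 1 :=
  (ED_cons_right_le y u v).trans (by omega)

theorem ED_cons_cons_le_of_le {x y : α} {u v : List α} {k : ℕ} (h : ED u v ≤ k) :
    ED (x :: u) (y :: v) ≤ k + 1 :=
  (ED_cons_cons_le x y u v).trans (by split <;> omega)

theorem ED_nil_nil : ED ([] : List α) [] = 0 := ED_nil_left []

theorem ED_flatten_map_le {ι : Type*} (l : List ι) (f g : ι → List α) (c : ℕ)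
    (h : ∀ i ∈ l, ED (f i) (g i) ≤ c) :
    ED (l.map f).flatten (l.map g).flatten ≤ l.length * c := by
  induction l with
  | nil => simp [ED_nil_nil]
  | cons i l ih =>
    have hi := h i List.mem_cons_self
    have hl := ih fun k hk => h k (List.mem_cons_of_mem i hk)
    have := ED_append_le (f i) (l.map f).flatten (g i) (l.map g).flatten
    simp only [List.map_cons, List.flatten_cons, List.length_cons] at this ⊢
    rw [add_one_mul]
    omega

end EditDistance

theorem List.flatten_map_range_two_mul {α : Type*} (f : ℕ → List α) (n : ℕ) :
    ((List.range (2 * n)).map f).flatten =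
      ((List.range n).map fun i => f (2 * i) ++ f (2 * i + 1)).flatten := by
  induction n with
  | zero => simp
  | succ n ih =>
    rw [show 2 * (n + 1) = 2 * n + 1 + 1 by ring, List.range_succ, List.range_succ,
      List.range_succ]
    simp [ih]

theorem List.flatten_map_range'_split {α : Type*} (f : ℕ → List α) (s k m : ℕ) :
    ((List.range' s (k + 1 + m)).map f).flatten =
      ((List.range' s k).map f).flatten ++
        (f (s + k) ++ ((List.range' (s + k + 1) m).map f).flatten) := by
  rw [show k + 1 + m = k + (m + 1) by omega, ← List.range'_append_1, List.range'_succ]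
  simp

def x1Block (a : ℕ → Bool) (i : ℕ) : List ℕ :=
  [6 * i + 1, if a i then 6 * i + 2 else 0, 6 * i + 4, if a i then 0 else 6 * i + 5]

def x2Block (b : ℕ → Bool) (i : ℕ) : List ℕ :=
  [if b i then 0 else 6 * i + 2, 6 * i + 3, if b i then 6 * i + 5 else 0, 6 * i + 6]

def yBlock (i : ℕ) : List ℕ :=
  [6 * i + 1, 6 * i + 2, 6 * i + 3, 6 * i + 4, 6 * i + 5, 6 * i + 6]

theorem x1_eq_flatten (n : ℕ) (a : ℕ → Bool) :
    x1 n a = ((List.range' 0 n).map (x1Block a)).flatten := by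
  rw [x1, List.flatten_map_range_two_mul, List.range_eq_range']
  congr 1
  refine List.map_congr_left fun i _ => ?_
  have h0 : 2 * i % 2 = 0 := by omega
  have h1 : (2 * i + 1) % 2 = 1 := by omega
  have h2 : 2 * i / 2 = i := by omega
  have h3 : (2 * i + 1) / 2 = i := by omega
  simp only [alphaP, x1Block, h0, h1, h2, h3, List.cons_append, List.nil_append]
  cases a i <;> simp <;> omega

theorem x2_eq_flatten (n : ℕ) (b : ℕ → Bool) :
    x2 n b = ((List.range' 0 n).map (x2Block b)).flatten := by
  rw [x2, List.flatten_map_range_two_mul, List.range_eq_range']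
  congr 1
  refine List.map_congr_left fun i _ => ?_
  have h0 : 2 * i % 2 = 0 := by omega
  have h1 : (2 * i + 1) % 2 = 1 := by omega
  have h2 : 2 * i / 2 = i := by omega
  have h3 : (2 * i + 1) / 2 = i := by omega
  simp only [betaP, x2Block, h0, h1, h2, h3, List.cons_append, List.nil_append]
  cases b i <;> simp <;> omega

theorem range'_eq_flatten_map_yBlock (s m : ℕ) :
    List.range' (6 * s + 1) (6 * m) = ((List.range' s m).map yBlock).flatten := by
  induction m generalizing s with
  | zero => simp
  | succ m ih =>
    rw [List.range'_succ, List.map_cons, List.flatten_cons, ← ih,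
      show 6 * (m + 1) = 6 + 6 * m by ring, ← List.range'_append_1,
      show 6 * s + 1 + 6 = 6 * (s + 1) + 1 by ring]
    simp [yBlock, List.range'_succ]

theorem ED_x1Block_yBlock_le (a : ℕ → Bool) (i : ℕ) : ED (x1Block a i) (yBlock i) ≤ 3 := by
  unfold x1Block yBlock
  cases a i <;> simp only [Bool.false_eq_true, ↓reduceIte]
  · exact ED_cons_self_le_of_le <| ED_cons_cons_le_of_le <| ED_cons_right_le_of_le <|
      ED_cons_self_le_of_le <| ED_cons_self_le_of_le <| ED_cons_right_le_of_le ED_nil_nil.le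
  · exact ED_cons_self_le_of_le <| ED_cons_self_le_of_le <| ED_cons_right_le_of_le <|
      ED_cons_self_le_of_le <| ED_cons_cons_le_of_le <| ED_cons_right_le_of_le ED_nil_nil.le

theorem ED_x2Block_yBlock_le (b : ℕ → Bool) (i : ℕ) : ED (x2Block b i) (yBlock i) ≤ 3 := by
  unfold x2Block yBlock
  cases b i <;> simp only [Bool.false_eq_true, ↓reduceIte]
  · exact ED_cons_right_le_of_le <| ED_cons_self_le_of_le <| ED_cons_self_le_of_le <|
      ED_cons_cons_le_of_le <| ED_cons_right_le_of_le <| ED_cons_self_le_of_le ED_nil_nil.le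
  · exact ED_cons_cons_le_of_le <| ED_cons_right_le_of_le <| ED_cons_self_le_of_le <|
      ED_cons_right_le_of_le <| ED_cons_self_le_of_le <| ED_cons_self_le_of_le ED_nil_nil.le

theorem ED_x1Block_le_of_true {a : ℕ → Bool} {i : ℕ} (ha : a i = true) :
    ED (x1Block a i) [6 * i + 1, 6 * i + 2] ≤ 2 := by
  simp only [x1Block, ha, ↓reduceIte]
  exact ED_cons_self_le_of_le <| ED_cons_self_le_of_le <| ED_cons_left_le_of_le <|
    ED_cons_left_le_of_le ED_nil_nil.le

theorem ED_x2Block_le_of_true {b : ℕ → Bool} {i : ℕ} (hb : b i = true) :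
    ED (x2Block b i) [6 * i + 3, 6 * i + 4, 6 * i + 5, 6 * i + 6] ≤ 2 := by
  simp only [x2Block, hb, ↓reduceIte]
  exact ED_cons_left_le_of_le <| ED_cons_self_le_of_le <| ED_cons_right_le_of_le <|
    ED_cons_self_le_of_le <| ED_cons_self_le_of_le ED_nil_nil.le

theorem ED_x1_le {a : ℕ → Bool} {j : ℕ} (m : ℕ) (ha : a j = true) :
    ED (x1 (j + 1 + m) a) (List.range' 1 (6 * j + 2)) ≤ 3 * j + 2 + 4 * m := by
  have hy : List.range' 1 (6 * j + 2) =
      ((List.range' 0 j).map yBlock).flatten ++ ([6 * j + 1, 6 * j + 2] ++ []) := by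
    rw [← range'_eq_flatten_map_yBlock, ← List.range'_append_1]
    simp [List.range'_succ]
    omega
  have hdel : ED ((List.range' (j + 1) m).map (x1Block a)).flatten [] = m * 4 := by
    simp [ED_nil_right, Function.comp_def, x1Block]
  rw [x1_eq_flatten, List.flatten_map_range'_split, hy, zero_add]
  grw [ED_append_le, ED_append_le, ED_x1Block_le_of_true ha, hdel,
    ED_flatten_map_le _ _ _ 3 fun i _ => ED_x1Block_yBlock_le a i]
  rw [List.length_range']
  omega

theorem ED_x2_le {b : ℕ → Bool} {j : ℕ} (m : ℕ) (hb : b j = true) :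
    ED (x2 (j + 1 + m) b) (List.range' (6 * j + 3) (6 * m + 4)) ≤ 4 * j + 2 + 3 * m := by
  have hy : List.range' (6 * j + 3) (6 * m + 4) =
      [] ++ ([6 * j + 3, 6 * j + 4, 6 * j + 5, 6 * j + 6] ++
        ((List.range' (j + 1) m).map yBlock).flatten) := by
    rw [← range'_eq_flatten_map_yBlock, show 6 * m + 4 = 4 + 6 * m by ring,
      ← List.range'_append_1]
    simp [List.range'_succ, Nat.mul_succ]
  have hdel : ED ((List.range' 0 j).map (x2Block b)).flatten [] = j * 4 := by
    simp [ED_nil_right, Function.comp_def, x2Block]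
  rw [x2_eq_flatten, List.flatten_map_range'_split, hy, zero_add]
  grw [ED_append_le, ED_append_le, ED_x2Block_le_of_true hb, hdel,
    ED_flatten_map_le _ _ _ 3 fun i _ => ED_x2Block_yBlock_le b i]
  rw [List.length_range']
  omega

theorem stmt7_general (n : ℕ) (a b : ℕ → Bool)
    (h : ∃ j < n, a j = true ∧ b j = true) :
    ED (x1 n a ++ x2 n b) (ystr n) ≤ 7 * n - 3 := by
  obtain ⟨j, hj, ha, hb⟩ := h
  obtain ⟨m, rfl⟩ : ∃ m, n = j + 1 + m := ⟨n - (j + 1), by omega⟩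
  have hy : ystr (j + 1 + m) =
      List.range' 1 (6 * j + 2) ++ List.range' (6 * j + 3) (6 * m + 4) := by
    rw [ystr, show 6 * (j + 1 + m) = (6 * j + 2) + (6 * m + 4) by ring, ← List.range'_append_1,
      show 1 + (6 * j + 2) = 6 * j + 3 by ring]
  rw [hy]
  grw [ED_append_le, ED_x1_le m ha, ED_x2_le m hb]
  omega

/-- If there exists an index `j ∈ {1,…,n}` with `α_j = β_j = 1`, then
`ED(x1 ∘ x2, y) ≤ 7n − 3`. -/
theorem stmt7 (n : ℕ) (hn : 0 < n) (a b : ℕ → Bool)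
    (h : ∃ j < n, a j = true ∧ b j = true) :
    ED (x1 n a ++ x2 n b) (ystr n) ≤ 7 * n - 3 :=
  stmt7_general n a b h
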